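/- Let q ≥ 2, n > m ≥ 0, b_n = q^{v_q(n)}, C_q(n,m) = b_n!/(b_m!·b_{n-m}!). Then b_n · C_q(n-1, m) = b_{m+1} · C_q(n, m+1). -/

import Mathlib

/-- `b_n = q^{v_q(n)}` for `n ≥ 1`, `b_0 = 0`, as a rational number. -/
noncomputable def bq (q n : ℕ) : ℚ := if n = 0 then 0 else (q : ℚ) ^ Nat.maxPowDiv q n

/-- Generalized factorial `b_n! = ∏_{m=1}^n b_m`. -/
noncomputable def bqfac (q n : ℕ) : ℚ := ∏ m ∈ Finset.Icc 1 n, bq q m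

/-- Generalized binomial coefficient `C_q(n,m)`, `0` for `m > n`. -/
noncomputable def Cq (q n m : ℕ) : ℚ :=
  if m ≤ n then bqfac q n / (bqfac q m * bqfac q (n - m)) else 0

lemma bq_ne_zero (q : ℕ) (hq : 2 ≤ q) (k : ℕ) (hk : k ≠ 0) : bq q k ≠ 0 := by
  simp only [bq, hk, if_false]
  positivity

lemma bqfac_ne_zero (q : ℕ) (hq : 2 ≤ q) (n : ℕ) : bqfac q n ≠ 0 := by
  refine Finset.prod_ne_zero_iff.2 fun k hk => bq_ne_zero q hq k ?_
  simp only [Finset.mem_Icc] at hk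
  omega

lemma bqfac_succ (q n : ℕ) : bqfac q (n + 1) = bqfac q n * bq q (n + 1) := by
  rw [bqfac, bqfac, Finset.prod_Icc_succ_top (by omega)]

theorem stmt6 (q : ℕ) (hq : 2 ≤ q) (n m : ℕ) (hmn : m < n) :
    bq q n * Cq q (n - 1) m = bq q (m + 1) * Cq q n (m + 1) := by
  obtain ⟨N, rfl⟩ : ∃ N, n = N + 1 := ⟨n - 1, by omega⟩
  have hm : m ≤ N := by omega
  simp only [Cq, Nat.add_sub_cancel, if_pos hm, if_pos (by omega : m + 1 ≤ N + 1)]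
  have h1 : N + 1 - (m + 1) = N - m := by omega
  rw [h1, bqfac_succ q N]
  have e2 : bqfac q (m + 1) = bqfac q m * bq q (m + 1) := bqfac_succ q m
  rw [e2]
  have h3 := bqfac_ne_zero q hq m
  have h4 := bqfac_ne_zero q hq (N - m)
  have h5 := bq_ne_zero q hq (m + 1) (by omega)
  field_simp
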